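/- arXiv:2302.09101 — 6 statements merged into one kernel-verified Lean document; each statement's English description precedes it below -/
import Mathlib

section
/- Let G and M be sets, and for each m ∈ M let S_m = (G_m, M_m, I_m) be a formal context and σ_m : G → G_m a map. Let K = (G, N, J) be the derived context with attribute set N = ⋃_{m∈M} {m}×M_m and incidence (g,(m,n)) ∈ J ⟺ (σ_m(g), n) ∈ I_m. Then the extents of K are exactly the sets of the form ⋂_{m∈M} σ_m⁻¹(E_m) where each E_m is an extent of S_m; equivalently, Ext(K) is exactly the set of all intersections of preimages σ_m⁻¹(E) of extents E of the scales S_m (with the empty intersection taken to be G). -/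
/-- `E` is an extent of the formal context `(G, M, I)`: `E = B'` for some set `B` of
attributes, where `B' = {g | ∀ m ∈ B, (g,m) ∈ I}`. -/
def IsExtent {G M : Type*} (I : G → M → Prop) (E : Set G) : Prop :=
  ∃ B : Set M, E = {g | ∀ m ∈ B, I g m}

/-- Let `S_m = (G_m, M_m, I_m)` be a scale and `σ_m : G → G_m` a map, for each
`m : M`.  The derived context `K = (G, N, J)` has attribute set `N = Σ m, M_m` and incidence
`(g, (m,n)) ∈ J ↔ (σ_m g, n) ∈ I_m`.  Then the extents of `K` are exactly the sets
`⋂ m, σ_m⁻¹(E_m)` where each `E_m` is an extent of `S_m` (for `M = ∅` the empty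
intersection is `G` itself). -/
theorem extents_of_derived_context {G : Type*} {M : Type*} {Gs : M → Type*} {Ms : M → Type*}
    (Im : ∀ m, Gs m → Ms m → Prop) (σ : ∀ m, G → Gs m) (E : Set G) :
    IsExtent (fun g (p : Σ m, Ms m) => Im p.1 (σ p.1 g) p.2) E ↔
      ∃ F : ∀ m, Set (Gs m), (∀ m, IsExtent (Im m) (F m)) ∧ E = ⋂ m, σ m ⁻¹' F m := by
  constructor
  · rintro ⟨B, rfl⟩
    refine ⟨fun m => {h | ∀ n ∈ {n | (⟨m, n⟩ : Σ m, Ms m) ∈ B}, Im m h n},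
      fun m => ⟨_, rfl⟩, ?_⟩
    ext g
    simp only [Set.mem_iInter, Set.mem_preimage, Set.mem_setOf_eq]
    constructor
    · intro h m n hn; exact h ⟨m, n⟩ hn
    · rintro h ⟨m, n⟩ hp; exact h m n hp
  · rintro ⟨F, hF, rfl⟩
    choose B hB using hF
    refine ⟨{p : Σ m, Ms m | p.2 ∈ B p.1}, ?_⟩
    ext g
    simp only [Set.mem_iInter, Set.mem_preimage, Set.mem_setOf_eq]
    constructor
    · intro h ⟨m, n⟩ hp
      have := h m; rw [hB m] at this; exact this n hp
    · intro h m
      rw [hB m]; intro n hn; exact h ⟨m, n⟩ hn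
end

section
/- Let K = (G,M,I) be a finite formal context. Then the ordinal scaling dimension of K equals the width of the partially ordered set (under set inclusion) of meet-irreducible extents of K. -/
/-- A meet-irreducible extent: an extent `E ≠ G` that is not the intersection of the
extents properly containing it. -/
def IsMeetIrreducibleExtent {G M : Type*} (I : G → M → Prop) (E : Set G) : Prop :=
  IsExtent I E ∧ E ≠ Set.univ ∧ E ≠ ⋂₀ {F | IsExtent I F ∧ E ⊂ F}

/-- `K = (G, M, I)` has ordinal scaling dimension at most `d`: there are `d` chains of
subsets of `G` such that the extents of `K` are exactly the intersections `⋂₀ F` of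
subfamilies `F` of the union of the chains (`⋂₀ ∅ = G`). -/
def HasOSDAtMost {G M : Type*} (I : G → M → Prop) (d : ℕ) : Prop :=
  ∃ C : Fin d → Set (Set G), (∀ i, IsChain (· ⊆ ·) (C i)) ∧
    {E | IsExtent I E} = {E | ∃ F ⊆ ⋃ i, C i, E = ⋂₀ F}

/-- The ordinal scaling dimension: the least `d` such that `HasOSDAtMost I d`. -/
noncomputable def osd {G M : Type*} (I : G → M → Prop) : ℕ :=
  sInf {d | HasOSDAtMost I d}

/-- The width of a family `S` of subsets of `G`, partially ordered by inclusion: the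
maximal cardinality of an antichain contained in `S`. -/
noncomputable def posetWidth {G : Type*} (S : Set (Set G)) : ℕ :=
  sSup {n | ∃ A ⊆ S, A.Finite ∧ IsAntichain (· ⊆ ·) A ∧ A.ncard = n}

/-!
A family of chains generates all extents by intersections exactly when its union contains every
meet-irreducible extent (and consists of extents): in a finite context every extent is the
intersection of the meet-irreducible extents above it, while a meet-irreducible extent is not an
intersection of strictly larger extents and so must itself belong to the family. Hence the ordinal
scaling dimension is the least number of chains covering the meet-irreducible extents, which is
their width by Dilworth's theorem.

Dilworth's theorem is proved following Galvin: remove a maximal element `a`, cover the rest by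
chains, and find a chain through `a` whose removal lowers the width.
-/

open Set

section Dilworth

variable {α : Type*} [PartialOrder α]

/-- A partition of `S` into `k` chains, encoded by the colour `f x < k` of each element. -/
def IsChainColoring (S : Set α) (k : ℕ) (f : α → ℕ) : Prop :=
  (∀ x ∈ S, f x < k) ∧ ∀ i, IsChain (· ≤ ·) {x ∈ S | f x = i}

namespace IsChainColoring

variable {S A K : Set α} {k : ℕ} {f : α → ℕ}

theorem injOn_of_isAntichain (hf : IsChainColoring S k f) (hAS : A ⊆ S)
    (hA : IsAntichain (· ≤ ·) A) : InjOn f A := by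
  intro x hx y hy hxy
  rcases (hf.2 (f y)).total ⟨hAS hx, hxy⟩ ⟨hAS hy, rfl⟩ with h | h
  exacts [hA.eq hx hy h, hA.eq' hx hy h]

theorem exists_mem_of_isAntichain_of_ncard_eq (hf : IsChainColoring S k f) (hAS : A ⊆ S)
    (hA : IsAntichain (· ≤ ·) A) (hAk : A.ncard = k) {i : ℕ} (hi : i < k) :
    ∃ x ∈ A, f x = i := by
  have hAfin : A.Finite := finite_of_ncard_pos (hAk ▸ i.zero_le.trans_lt hi)
  have himage : f '' A = Iio k :=
    eq_of_subset_of_ncard_le (image_subset_iff.2 fun x hx => hf.1 x (hAS hx))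
      (by rw [ncard_Iio_nat, (hf.injOn_of_isAntichain hAS hA).ncard_image, hAk]) (finite_Iio k)
  exact (himage ▸ mem_Iio.2 hi : i ∈ f '' A)

theorem exists_union_chain (hf : IsChainColoring S k f) (hK : IsChain (· ≤ ·) K) :
    ∃ g, IsChainColoring (S ∪ K) (k + 1) g := by
  classical
  refine ⟨fun x => if x ∈ K then k else f x, ?_, fun i => ?_⟩
  · rintro x (hx | hx)
    · have := hf.1 x hx
      dsimp only
      split_ifs <;> omega
    · simp [hx]
  · by_cases hik : i = k
    · refine hK.mono fun x ⟨hx, hxi⟩ => ?_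
      by_contra hxK
      simp only [hxK, if_false] at hxi
      exact (hf.1 x (hx.resolve_right hxK)).ne (hxi.trans hik)
    · refine (hf.2 i).mono fun x ⟨hx, hxi⟩ => ?_
      by_cases hxK : x ∈ K
      · simp only [hxK, if_true] at hxi
        exact absurd hxi.symm hik
      · simp only [hxK, if_false] at hxi
        exact ⟨hx.resolve_right hxK, hxi⟩

/-- `m i` is the largest element of colour `i` that lies in some antichain of size `k`. -/
theorem exists_transversal_above_maxAntichains (hf : IsChainColoring S k f) (hS : S.Finite)
    (hA₀ : ∃ A ⊆ S, IsAntichain (· ≤ ·) A ∧ A.ncard = k) :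
    ∃ m : Fin k → α, (∀ i, m i ∈ S ∧ f (m i) = i) ∧ (∀ i j, m i ≤ m j → i = j) ∧
      ∀ A ⊆ S, IsAntichain (· ≤ ·) A → A.ncard = k → ∀ y ∈ A, ∀ i : Fin k, f y = i → y ≤ m i := by
  set D : ℕ → Set α :=
    fun i => {x ∈ S | f x = i ∧ ∃ A ⊆ S, IsAntichain (· ≤ ·) A ∧ A.ncard = k ∧ x ∈ A}
  have hD : ∀ i : Fin k, ∃ z ∈ D i, ∀ y ∈ D i, y ≤ z := by
    intro i
    obtain ⟨A, hAS, hA, hAk⟩ := hA₀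
    obtain ⟨x, hxA, hx⟩ := hf.exists_mem_of_isAntichain_of_ncard_eq hAS hA hAk i.2
    have hDchain : IsChain (· ≤ ·) (D i) := (hf.2 i).mono fun y hy => by exact ⟨hy.1, hy.2.1⟩
    have hDfin : (D i).Finite := hS.subset fun y hy => hy.1
    obtain ⟨z, hz⟩ := hDfin.exists_maximal ⟨x, hAS hxA, hx, A, hAS, hA, hAk, hxA⟩
    refine ⟨z, hz.prop, fun y hy => ?_⟩
    exact (hDchain.total hy hz.prop).elim id (hz.le_of_ge hy)
  choose m hmD hmax using hD
  refine ⟨m, fun i => ⟨(hmD i).1, (hmD i).2.1⟩, fun i j hij => ?_, ?_⟩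
  · obtain ⟨-, hj, A, hAS, hA, hAk, hmA⟩ := hmD j
    obtain ⟨y, hyA, hy⟩ := hf.exists_mem_of_isAntichain_of_ncard_eq hAS hA hAk i.2
    have hym : y = m j := hA.eq hyA hmA ((hmax i y ⟨hAS hyA, hy, A, hAS, hA, hAk, hyA⟩).trans hij)
    exact Fin.ext (by rw [← hy, hym, hj])
  · intro A hAS hA hAk y hyA i hy
    exact hmax i y ⟨hAS hyA, hy, A, hAS, hA, hAk, hyA⟩

end IsChainColoring

/-- Galvin's inductive step for Dilworth's theorem. -/
theorem exists_chain_of_isChainColoring_sdiff_singleton {S : Set α} {a : α} {k : ℕ} {f : α → ℕ}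
    (hS : S.Finite) (ha : Maximal (· ∈ S) a)
    (hk : ∀ A ⊆ S, IsAntichain (· ≤ ·) A → A.ncard ≤ k + 1)
    (hf : IsChainColoring (S \ {a}) (k + 1) f) :
    ∃ K ⊆ S, a ∈ K ∧ IsChain (· ≤ ·) K ∧ ∀ A ⊆ S \ K, IsAntichain (· ≤ ·) A → A.ncard ≤ k := by
  have hk' : ∀ A ⊆ S \ {a}, IsAntichain (· ≤ ·) A → A.ncard ≤ k + 1 :=
    fun A hA => hk A (hA.trans sdiff_subset)
  by_cases hA₀ : ∃ A ⊆ S \ {a}, IsAntichain (· ≤ ·) A ∧ A.ncard = k + 1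
  swap
  · refine ⟨{a}, singleton_subset_iff.2 ha.prop, rfl, IsChain.singleton, fun A hAS hA => ?_⟩
    exact Nat.le_of_lt_succ ((hk' A hAS hA).lt_of_ne fun h => hA₀ ⟨A, hAS, hA, h⟩)
  obtain ⟨m, hm, hm_antichain, hm_above⟩ := hf.exists_transversal_above_maxAntichains hS.sdiff hA₀
  by_cases hma : ∃ i, m i ≤ a
  · obtain ⟨i, hi⟩ := hma
    refine ⟨insert a {x ∈ S \ {a} | f x = i ∧ x ≤ m i},
      insert_subset ha.prop ((sep_subset _ _).trans sdiff_subset), mem_insert _ _, ?_,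
      fun A hAS hA => ?_⟩
    · exact ((hf.2 i).mono fun x hx => by exact ⟨hx.1, hx.2.1⟩).insert
        fun b hb _ => Or.inr (hb.2.2.trans hi)
    · have hAS' : A ⊆ S \ {a} :=
        hAS.trans (sdiff_subset_sdiff_right (singleton_subset_iff.2 (mem_insert _ _)))
      by_contra! hlt
      have hAk : A.ncard = k + 1 := le_antisymm (hk' A hAS' hA) hlt
      obtain ⟨y, hyA, hy⟩ := hf.exists_mem_of_isAntichain_of_ncard_eq hAS' hA hAk i.2
      exact (hAS hyA).2 (Or.inr ⟨hAS' hyA, hy, hm_above A hAS' hA hAk y hyA i hy⟩)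
  · push Not at hma
    exfalso
    have hm_inj : Function.Injective m := fun i j hij => hm_antichain i j hij.le
    have ha_range : a ∉ range m := by
      rintro ⟨i, rfl⟩
      exact (hm i).1.2 rfl
    have hB : IsAntichain (· ≤ ·) (insert a (range m)) := by
      refine IsAntichain.insert ?_ ?_ ?_
      · rintro _ ⟨i, rfl⟩ _ ⟨j, rfl⟩ hne hij
        exact hne (congrArg m (hm_antichain i j hij))
      · rintro _ ⟨i, rfl⟩ -
        exact hma i
      · rintro _ ⟨i, rfl⟩ - hai
        exact hma i (ha.le_of_ge (hm i).1.1 hai)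
    have hBS : insert a (range m) ⊆ S :=
      insert_subset ha.prop (range_subset_iff.2 fun i => (hm i).1.1)
    have := hk _ hBS hB
    rw [ncard_insert_of_notMem ha_range (finite_range m), ncard_range_of_injective hm_inj,
      Nat.card_fin] at this
    omega

theorem exists_isChainColoring {S : Set α} (hS : S.Finite) {k : ℕ}
    (hk : ∀ A ⊆ S, IsAntichain (· ≤ ·) A → A.ncard ≤ k) : ∃ f, IsChainColoring S k f := by
  induction hn : S.ncard using Nat.strong_induction_on generalizing S k with
  | _ n ih =>
  obtain rfl | hne := S.eq_empty_or_nonempty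
  · exact ⟨0, by simp [IsChainColoring]⟩
  obtain ⟨a, ha⟩ := hS.exists_maximal hne
  obtain ⟨j, rfl⟩ : ∃ j, k = j + 1 := Nat.exists_eq_add_one_of_ne_zero <|
    Nat.one_le_iff_ne_zero.1 <| by
      simpa using hk {a} (singleton_subset_iff.2 ha.prop) IsAntichain.singleton
  obtain ⟨f, hf⟩ := ih _ (hn ▸ ncard_sdiff_singleton_lt_of_mem ha.prop hS) hS.sdiff
    (fun A hA => hk A (hA.trans sdiff_subset)) rfl
  obtain ⟨K, hKS, haK, hK, hwidth⟩ := exists_chain_of_isChainColoring_sdiff_singleton hS ha hk hf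
  obtain ⟨g, hg⟩ := ih _ (hn ▸ ncard_lt_ncard (sdiff_ssubset_left_iff.2 ⟨a, ha.prop, haK⟩) hS)
    hS.sdiff hwidth rfl
  simpa [sdiff_union_of_subset hKS] using hg.exists_union_chain hK

/-- **Dilworth's theorem**. -/
theorem exists_chain_cover_of_antichain_ncard_le {S : Set α} (hS : S.Finite) {k : ℕ}
    (hk : ∀ A ⊆ S, IsAntichain (· ≤ ·) A → A.ncard ≤ k) :
    ∃ C : Fin k → Set α, (∀ i, IsChain (· ≤ ·) (C i)) ∧ ⋃ i, C i = S := by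
  obtain ⟨f, hf_lt, hf_chain⟩ := exists_isChainColoring hS hk
  refine ⟨fun i => {x ∈ S | f x = i}, fun i => hf_chain i, ?_⟩
  ext x
  simp only [mem_iUnion, mem_ofPred_eq]
  exact ⟨fun ⟨_, hx, _⟩ => hx, fun hx => ⟨⟨f x, hf_lt x hx⟩, hx, rfl⟩⟩

theorem IsAntichain.ncard_le_of_subset_iUnion_chains {ι : Type*} [Finite ι] {A : Set α}
    {C : ι → Set α} (hA : IsAntichain (· ≤ ·) A) (hC : ∀ i, IsChain (· ≤ ·) (C i))
    (hAC : A ⊆ ⋃ i, C i) : A.ncard ≤ Nat.card ι := by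
  choose c hc using fun x : A => mem_iUnion.1 (hAC x.2)
  rw [← Nat.card_coe_set_eq]
  refine Nat.card_le_card_of_injective c fun x y hxy => Subtype.ext ?_
  rcases (hC (c y)).total (hxy ▸ hc x) (hc y) with h | h
  exacts [hA.eq x.2 y.2 h, hA.eq' x.2 y.2 h]

end Dilworth

theorem isGreatest_posetWidth {G : Type*} {S : Set (Set G)} (hS : S.Finite) :
    IsGreatest {n | ∃ A ⊆ S, A.Finite ∧ IsAntichain (· ⊆ ·) A ∧ A.ncard = n} (posetWidth S) := by
  have hbdd : BddAbove {n | ∃ A ⊆ S, A.Finite ∧ IsAntichain (· ⊆ ·) A ∧ A.ncard = n} :=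
    ⟨S.ncard, by rintro _ ⟨A, hAS, -, -, rfl⟩; exact ncard_le_ncard hAS hS⟩
  exact ⟨Nat.sSup_mem ⟨0, ∅, empty_subset S, finite_empty, IsAntichain.empty, ncard_empty _⟩ hbdd,
    fun _ hn => le_csSup hbdd hn⟩

section FormalContext

variable {G M : Type*} {I : G → M → Prop}

theorem isExtent_sInter {𝓕 : Set (Set G)} (h : ∀ E ∈ 𝓕, IsExtent I E) : IsExtent I (⋂₀ 𝓕) := by
  choose B hB using h
  refine ⟨⋃ (E) (hE : E ∈ 𝓕), B E hE, ?_⟩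
  ext g
  simp only [mem_sInter, mem_ofPred_eq, mem_iUnion]
  constructor
  · rintro hg m ⟨E, hE, hm⟩
    exact (hB E hE ▸ hg E hE : g ∈ {g | ∀ m ∈ B E hE, I g m}) m hm
  · intro hg E hE
    rw [hB E hE]
    exact fun m hm => hg m ⟨E, hE, hm⟩

theorem sInter_meetIrreducibleExtent_supset [Finite G] {E : Set G} (hE : IsExtent I E) :
    ⋂₀ {F | IsMeetIrreducibleExtent I F ∧ E ⊆ F} = E := by
  induction E using WellFoundedGT.induction with
  | _ E ih =>
  refine (subset_sInter fun F hF => hF.2).antisymm' ?_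
  by_cases hMI : IsMeetIrreducibleExtent I E
  · exact sInter_subset_of_mem ⟨hMI, subset_rfl⟩
  by_cases hU : E = univ
  · exact hU ▸ subset_univ _
  have hE_eq : ⋂₀ {F | IsExtent I F ∧ E ⊂ F} = E := by
    by_contra h
    exact hMI ⟨hE, hU, Ne.symm h⟩
  refine (subset_sInter fun F hF => ?_).trans hE_eq.subset
  obtain ⟨hF, hEF⟩ := hF
  rw [← ih F hEF hF]
  exact sInter_subset_sInter fun X hX => ⟨hX.1, hEF.le.trans hX.2⟩

theorem meetIrreducibleExtent_subset_of_setOf_isExtent_eq {𝓒 : Set (Set G)}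
    (h : {E | IsExtent I E} = {E | ∃ 𝓕 ⊆ 𝓒, E = ⋂₀ 𝓕}) :
    {E | IsMeetIrreducibleExtent I E} ⊆ 𝓒 := by
  rw [Set.ext_iff] at h
  rintro E ⟨hE, -, hE_ne⟩
  obtain ⟨𝓕, h𝓕, rfl⟩ := (h E).1 hE
  by_contra hE𝓒
  refine hE_ne ((subset_sInter fun F hF => hF.2.le).antisymm ?_)
  refine sInter_subset_sInter fun X hX => ⟨?_, (sInter_subset_of_mem hX).ssubset_of_ne ?_⟩
  · exact (h X).2 ⟨{X}, singleton_subset_iff.2 (h𝓕 hX), (sInter_singleton X).symm⟩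
  · rintro rfl
    exact hE𝓒 (h𝓕 hX)

theorem setOf_isExtent_eq_iff [Finite G] {𝓒 : Set (Set G)} :
    {E | IsExtent I E} = {E | ∃ 𝓕 ⊆ 𝓒, E = ⋂₀ 𝓕} ↔
      {E | IsMeetIrreducibleExtent I E} ⊆ 𝓒 ∧ 𝓒 ⊆ {E | IsExtent I E} := by
  refine ⟨fun h => ⟨meetIrreducibleExtent_subset_of_setOf_isExtent_eq h, fun X hX => ?_⟩,
    fun ⟨hMI, hext⟩ => ?_⟩
  · exact (Set.ext_iff.1 h X).2 ⟨{X}, singleton_subset_iff.2 hX, (sInter_singleton X).symm⟩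
  ext E
  refine ⟨fun hE => ⟨_, fun F hF => hMI hF.1, (sInter_meetIrreducibleExtent_supset hE).symm⟩, ?_⟩
  rintro ⟨𝓕, h𝓕, rfl⟩
  exact isExtent_sInter fun X hX => hext (h𝓕 hX)

end FormalContext

theorem osd_eq_width_meet_irreducibles_general {G M : Type*} [Fintype G]
    (I : G → M → Prop) :
    osd I = posetWidth {E | IsMeetIrreducibleExtent I E} := by
  set 𝓜 := {E | IsMeetIrreducibleExtent I E}
  obtain ⟨⟨A, hA𝓜, -, hA, hA_card⟩, hwidth⟩ := isGreatest_posetWidth (toFinite 𝓜)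
  refine IsLeast.csInf_eq ⟨?_, fun d ⟨C, hC, hext⟩ => ?_⟩
  · obtain ⟨C, hC, hC𝓜⟩ := exists_chain_cover_of_antichain_ncard_le (toFinite 𝓜)
      fun B hB𝓜 hB => hwidth ⟨B, hB𝓜, toFinite B, hB, rfl⟩
    exact ⟨C, hC, setOf_isExtent_eq_iff.2 ⟨hC𝓜.superset, hC𝓜.subset.trans fun E hE => hE.1⟩⟩
  · have hA𝓒 := hA𝓜.trans (setOf_isExtent_eq_iff.1 hext).1
    simpa [hA_card] using hA.ncard_le_of_subset_iUnion_chains hC hA𝓒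

/-- For a finite formal context, the ordinal scaling dimension equals the
width of the ordered set of meet-irreducible extents. -/
theorem osd_eq_width_meet_irreducibles {G M : Type*} [Fintype G] [Fintype M]
    (I : G → M → Prop) :
    osd I = posetWidth {E | IsMeetIrreducibleExtent I E} :=
  osd_eq_width_meet_irreducibles_general I
end

section
/- Let K = (G,M,I) be a finite formal context with ordinal scaling dimension d. Then the complement (G×M)∖I of the incidence relation is the union of at most d Ferrers relations; that is, the Ferrers dimension of K (which equals the order dimension of the concept lattice of K) is at most the ordinal scaling dimension of K. -/
/-- A Ferrers relation: if `(g,m)` and `(h,n)` belong to `F`, then `(g,n) ∈ F` or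
`(h,m) ∈ F`. -/
def IsFerrers {G M : Type*} (F : Set (G × M)) : Prop :=
  ∀ p ∈ F, ∀ q ∈ F, (p.1, q.2) ∈ F ∨ (q.1, p.2) ∈ F

/-- The Ferrers dimension of `(G, M, I)`: the least number of Ferrers relations whose
union is the complement of `I`. -/
noncomputable def ferrersDim {G M : Type*} (I : G → M → Prop) : ℕ :=
  sInf {d | ∃ F : Fin d → Set (G × M), (∀ i, IsFerrers (F i)) ∧
    (⋃ i, F i) = {p : G × M | ¬ I p.1 p.2}}

/-- Intersections of subfamilies of a chain are comparable. -/
lemma sInter_subset_or_subset {G : Type*} {C : Set (Set G)} (hC : IsChain (· ⊆ ·) C)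
    {S T : Set (Set G)} (hS : S ⊆ C) (hT : T ⊆ C) :
    ⋂₀ S ⊆ ⋂₀ T ∨ ⋂₀ T ⊆ ⋂₀ S := by
  by_contra h
  push_neg at h
  obtain ⟨h1, h2⟩ := h
  rw [Set.not_subset] at h1 h2
  obtain ⟨g, hg, hg'⟩ := h1
  obtain ⟨x, hx, hx'⟩ := h2
  simp only [Set.mem_sInter, not_forall] at hg' hx'
  obtain ⟨t, htT, hgt⟩ := hg'
  obtain ⟨s, hsS, hxs⟩ := hx'
  rcases eq_or_ne s t with rfl | hne
  · exact hgt (hg s hsS)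
  rcases hC.total (hS hsS) (hT htT) with hst | hts
  · exact hgt (hst (hg s hsS))
  · exact hxs (hts (hx t htT))

/-- Extents are closed under arbitrary intersections. -/
lemma isExtent_sInter_s3 {G M : Type*} (I : G → M → Prop) {F : Set (Set G)}
    (hF : ∀ E ∈ F, IsExtent I E) : IsExtent I (⋂₀ F) := by
  classical
  choose B hB using hF
  refine ⟨⋃ (E : Set G) (h : E ∈ F), B E h, ?_⟩
  ext g
  simp only [Set.mem_sInter, Set.mem_setOf_eq, Set.mem_iUnion]
  constructor
  · rintro hg m ⟨E, hE, hm⟩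
    have := hg E hE
    rw [hB E hE] at this
    exact this m hm
  · intro hg E hE
    rw [hB E hE]
    exact fun m hm => hg m ⟨E, hE, hm⟩

lemma hasOSD_exists {G M : Type*} [Fintype G] (I : G → M → Prop) :
    ∃ n, HasOSDAtMost I n := by
  classical
  let s : Finset (Set G) := Finset.univ.filter (IsExtent I)
  refine ⟨s.card, fun i => {((s.equivFin.symm i : s) : Set G)},
    fun i => Set.subsingleton_singleton.isChain, ?_⟩
  have hU : (⋃ i, ({((s.equivFin.symm i : s) : Set G)} : Set (Set G)))
      = {E | IsExtent I E} := by
    ext E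
    simp only [Set.mem_iUnion, Set.mem_singleton_iff, Set.mem_setOf_eq]
    constructor
    · rintro ⟨i, rfl⟩
      exact (Finset.mem_filter.mp (s.equivFin.symm i).2).2
    · intro hE
      have hEs : E ∈ s := by simpa [s, Finset.mem_filter] using hE
      exact ⟨s.equivFin ⟨E, hEs⟩, by simp⟩
  rw [hU]
  ext E
  simp only [Set.mem_setOf_eq]
  constructor
  · intro hE
    exact ⟨{E}, by simpa using hE, by simp⟩
  · rintro ⟨F, hF, rfl⟩
    exact isExtent_sInter_s3 I hF

/-- If a finite formal context `K = (G, M, I)` has ordinal scaling dimension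
`d`, then the complement of the incidence relation is the union of (at most) `d` Ferrers
relations; that is, the Ferrers dimension of `K` is at most its ordinal scaling
dimension. -/
theorem ferrersDim_le_osd {G M : Type*} [Fintype G] [Fintype M] (I : G → M → Prop)
    (d : ℕ) (hd : osd I = d) :
    (∃ F : Fin d → Set (G × M), (∀ i, IsFerrers (F i)) ∧
      (⋃ i, F i) = {p : G × M | ¬ I p.1 p.2}) ∧
    ferrersDim I ≤ osd I := by
  classical
  have hne : {n | HasOSDAtMost I n}.Nonempty := hasOSD_exists I
  have hmem : HasOSDAtMost I (osd I) := Nat.sInf_mem hne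
  rw [hd] at hmem
  obtain ⟨C, hchain, hext⟩ := hmem
  have hm' : ∀ m : M, ∃ F ⊆ ⋃ i, C i, {g | I g m} = ⋂₀ F := by
    intro m
    have hE : IsExtent I {g | I g m} := ⟨{m}, by ext g; simp⟩
    have : {g | I g m} ∈ {E | ∃ F ⊆ ⋃ i, C i, E = ⋂₀ F} := hext ▸ hE
    exact this
  choose Fm hFm hFm' using hm'
  set A : Fin d → M → Set G := fun i m => ⋂₀ (Fm m ∩ C i) with hA
  have hAint : ∀ m, (⋂ i, A i m) = {g | I g m} := by
    intro m
    rw [hFm' m]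
    have hsplit : Fm m = ⋃ i, Fm m ∩ C i := by
      ext S
      simp only [Set.mem_iUnion, Set.mem_inter_iff]
      constructor
      · intro hS
        obtain ⟨i, hi⟩ := by simpa using hFm m hS
        exact ⟨i, hS, hi⟩
      · rintro ⟨i, hS, _⟩; exact hS
    conv_rhs => rw [hsplit]
    rw [Set.sInter_iUnion]
  have hcomp : ∀ i (m n : M), A i m ⊆ A i n ∨ A i n ⊆ A i m := fun i m n =>
    sInter_subset_or_subset (hchain i) Set.inter_subset_right Set.inter_subset_right
  have key : ∃ F : Fin d → Set (G × M), (∀ i, IsFerrers (F i)) ∧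
      (⋃ i, F i) = {p : G × M | ¬ I p.1 p.2} := by
    refine ⟨fun i => {p | p.1 ∉ A i p.2}, ?_, ?_⟩
    · intro i p hp q hq
      rcases hcomp i p.2 q.2 with h | h
      · exact Or.inr fun hx => hq (h hx)
      · exact Or.inl fun hx => hp (h hx)
    · ext p
      simp only [Set.mem_iUnion, Set.mem_setOf_eq]
      have := hAint p.2
      constructor
      · rintro ⟨i, hi⟩ hI
        have : p.1 ∈ ⋂ i, A i p.2 := by rw [hAint p.2]; exact hI
        exact hi (Set.mem_iInter.mp this i)
      · intro hI
        by_contra h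
        push_neg at h
        have : p.1 ∈ ⋂ i, A i p.2 := Set.mem_iInter.mpr h
        rw [hAint p.2] at this
        exact hI this
  refine ⟨key, ?_⟩
  rw [hd]
  exact Nat.sInf_le key
end

section
/- Consider the formal context K = (Fin 3, Fin 3, =) whose incidence relation is equality (the 3×3 identity context). Then the complement of its incidence relation is the union of 2 Ferrers relations but not of 1 Ferrers relation (its Ferrers dimension is 2), while its ordinal scaling dimension is 3. In particular, the order dimension of the concept lattice is in general strictly smaller than the ordinal scaling dimension. -/
lemma extent_cases {E : Set (Fin 3)} (h : IsExtent (fun g m : Fin 3 => g = m) E) :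
    E = ∅ ∨ E = Set.univ ∨ ∃ g, E = {g} := by
  obtain ⟨B, rfl⟩ := h
  rcases B.subsingleton_or_nontrivial with hs | hn
  · rcases hs.eq_empty_or_singleton with rfl | ⟨m, rfl⟩
    · right; left; ext g; simp
    · right; right; exact ⟨m, by ext g; simp⟩
  · left
    obtain ⟨m, hm, n, hn, hmn⟩ := hn
    rw [Set.eq_empty_iff_forall_notMem]
    intro g hg
    exact hmn ((hg m hm).symm.trans (hg n hn))

lemma osd_upper : HasOSDAtMost (fun g m : Fin 3 => g = m) 3 := by
  refine ⟨fun i => {({(i : Fin 3)} : Set (Fin 3))}, ?_, ?_⟩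
  · intro i a ha b hb hab
    simp only [Set.mem_singleton_iff] at ha hb
    exact absurd (ha.trans hb.symm) hab
  · ext E
    constructor
    · rintro ⟨B, rfl⟩
      refine ⟨(fun m => ({m} : Set (Fin 3))) '' B, ?_, ?_⟩
      · rintro S ⟨m, hm, rfl⟩
        exact Set.mem_iUnion.2 ⟨m, rfl⟩
      · ext g; simp
    · rintro ⟨F, hF, rfl⟩
      refine ⟨{m | ({m} : Set (Fin 3)) ∈ F}, ?_⟩
      ext g
      simp only [Set.mem_sInter, Set.mem_setOf_eq]
      constructor
      · intro h m hm
        exact h {m} hm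
      · intro h S hS
        obtain ⟨i, hi⟩ := Set.mem_iUnion.1 (hF hS)
        simp only [Set.mem_singleton_iff] at hi
        subst hi
        exact h i hS

lemma osd_lower (d : ℕ) (h : HasOSDAtMost (fun g m : Fin 3 => g = m) d) : 3 ≤ d := by
  obtain ⟨C, hchain, hext⟩ := h
  -- every element of ⋃ C is an extent
  have hmem_ext : ∀ S, S ∈ ⋃ i, C i → IsExtent (fun g m : Fin 3 => g = m) S := by
    intro S hS
    have : S ∈ {E | ∃ F ⊆ ⋃ i, C i, E = ⋂₀ F} :=
      ⟨{S}, by simpa using hS, by simp⟩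
    rw [← hext] at this
    exact this
  -- every singleton is in some chain
  have hsing : ∀ g : Fin 3, ∃ i, ({g} : Set (Fin 3)) ∈ C i := by
    intro g
    have hgx : IsExtent (fun g m : Fin 3 => g = m) {g} := ⟨{g}, by ext x; simp⟩
    have : ({g} : Set (Fin 3)) ∈ {E | ∃ F ⊆ ⋃ i, C i, E = ⋂₀ F} := hext ▸ hgx
    obtain ⟨F, hF, hFeq⟩ := this
    have hne : ∃ S ∈ F, S = ({g} : Set (Fin 3)) := by
      by_contra hcon
      push_neg at hcon
      have : ⋂₀ F = Set.univ := by
        rw [Set.sInter_eq_univ]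
        intro S hS
        rcases extent_cases (hmem_ext S (hF hS)) with rfl | rfl | ⟨g', rfl⟩
        · exfalso
          have : g ∈ ⋂₀ F := hFeq ▸ rfl
          exact this ∅ hS
        · rfl
        · exfalso
          have hg : g ∈ ⋂₀ F := hFeq ▸ rfl
          have : g = g' := hg {g'} hS
          exact hcon {g'} hS (by rw [this])
      rw [this] at hFeq
      have h0 : (0 : Fin 3) ∈ ({g} : Set (Fin 3)) := hFeq ▸ Set.mem_univ _
      have h1 : (1 : Fin 3) ∈ ({g} : Set (Fin 3)) := hFeq ▸ Set.mem_univ _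
      simp only [Set.mem_singleton_iff] at h0 h1
      rw [← h0] at h1
      exact absurd h1 (by decide)
    obtain ⟨S, hSF, rfl⟩ := hne
    exact Set.mem_iUnion.1 (hF hSF)
  choose f hf using hsing
  have hinj : Function.Injective f := by
    intro g h hgh
    have h1 := hf g
    have h2 := hf h
    rw [hgh] at h1
    by_contra hne
    have hne' : ({g} : Set (Fin 3)) ≠ {h} := fun e =>
      hne (Set.singleton_eq_singleton_iff.1 e)
    rcases hchain (f h) h1 h2 hne' with hsub | hsub
    · exact hne (Set.singleton_subset_singleton.1 hsub)
    · exact hne (Set.singleton_subset_singleton.1 hsub).symm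
  simpa using Fintype.card_le_of_injective f hinj

/-- For the 3×3 identity context `(Fin 3, Fin 3, =)`, the complement of the
incidence is a union of two Ferrers relations but is not itself (the union of) one Ferrers
relation (so its Ferrers dimension is 2), while its ordinal scaling dimension is 3; in
particular the two quantities differ. -/
theorem identity_context_ferrers_two_osd_three :
    (∃ F₁ F₂ : Set (Fin 3 × Fin 3), IsFerrers F₁ ∧ IsFerrers F₂ ∧
      F₁ ∪ F₂ = {p : Fin 3 × Fin 3 | ¬ p.1 = p.2}) ∧
    (¬ ∃ F : Set (Fin 3 × Fin 3), IsFerrers F ∧ F = {p : Fin 3 × Fin 3 | ¬ p.1 = p.2}) ∧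
    osd (fun g m : Fin 3 => g = m) = 3 := by
  refine ⟨?_, ?_, ?_⟩
  · refine ⟨{p | p.1 < p.2}, {p | p.2 < p.1}, ?_, ?_, ?_⟩
    · intro p hp q hq
      simp only [Set.mem_setOf_eq] at *
      rcases lt_or_ge p.1 q.2 with h | h
      · exact Or.inl h
      · exact Or.inr ((lt_of_lt_of_le hq h).trans hp)
    · intro p hp q hq
      simp only [Set.mem_setOf_eq] at *
      rcases lt_or_ge q.2 p.1 with h | h
      · exact Or.inl h
      · exact Or.inr ((lt_of_lt_of_le hp h).trans hq)
    · ext p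
      simp only [Set.mem_union, Set.mem_setOf_eq]
      omega
  · rintro ⟨F, hFer, rfl⟩
    have h01 : ((0 : Fin 3), (1 : Fin 3)) ∈ {p : Fin 3 × Fin 3 | ¬ p.1 = p.2} := by simp
    have h10 : ((1 : Fin 3), (0 : Fin 3)) ∈ {p : Fin 3 × Fin 3 | ¬ p.1 = p.2} := by simp
    rcases hFer _ h01 _ h10 with h | h <;> simp at h
  · refine le_antisymm (Nat.sInf_le osd_upper) (le_csInf ⟨3, osd_upper⟩ ?_)
    intro d hd
    exact osd_lower d hd
end

section
/- Let G be a finite set and let R be a finite nonempty family of nonempty subsets of G such that (i) R contains no three pairwise ⊆-incomparable members and (ii) R is closed under complementation in G (A ∈ R implies G∖A ∈ R). Then R is the disjoint union of two chains of equal cardinality: there is a chain C ⊆ R (totally ordered by inclusion) such that R = C ∪ {G∖A : A ∈ C}, the families C and {G∖A : A ∈ C} are disjoint, and each has cardinality |R|/2. -/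
/-!
Call two members of `R` equivalent when they are comparable. A member other than `∅` and `univ`
is comparable with exactly one of `A`, `Aᶜ` for every such `A`; so if `A ~ B ~ D` but `A ≁ D`, then
`A`, `D` and `Bᶜ` are pairwise incomparable, which the width condition forbids. Comparability is
therefore an equivalence relation on `R`, each class is a chain, and complementation swaps the
class of any `A` with the rest of `R`.
-/

open Set Relation

theorem Set.ncard_union_eq_two_mul {α : Type*} {s t : Set α} (hst : Disjoint s t)
    (hcard : t.encard = s.encard) : (s ∪ t).ncard = 2 * s.ncard := by
  rw [ncard_def, ncard_def, encard_union_eq hst, hcard]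
  cases h : s.encard with
  | top => simp
  | coe n => rw [← ENat.natCast_add, ENat.toNat_natCast, ENat.toNat_natCast, two_mul]

theorem BooleanAlgebra.not_symmGen_and_symmGen_compl {α : Type*} [BooleanAlgebra α] {a b : α}
    (ha : a ≠ ⊥) (ha' : a ≠ ⊤) (hb : b ≠ ⊥) (hb' : b ≠ ⊤) :
    ¬ (SymmGen (· ≤ ·) a b ∧ SymmGen (· ≤ ·) aᶜ b) := by
  rintro ⟨hab | hba, hacb | hbac⟩
  · exact hb' (top_le_iff.mp (sup_compl_eq_top (x := a) ▸ sup_le hab hacb))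
  · exact ha (le_compl_self.mp (hab.trans hbac))
  · exact ha' (compl_le_self.mp (hacb.trans hba))
  · exact hb (le_bot_iff.mp (inf_compl_eq_bot (a := a) ▸ le_inf hba hbac))

structure IsLadder {α : Type*} [BooleanAlgebra α] (R : Set α) : Prop where
  bot_notMem : ⊥ ∉ R
  compl_mem : ∀ a ∈ R, aᶜ ∈ R
  width_le_two : ∀ a ∈ R, ∀ b ∈ R, ∀ c ∈ R,
    SymmGen (· ≤ ·) a b ∨ SymmGen (· ≤ ·) a c ∨ SymmGen (· ≤ ·) b c

namespace IsLadder

variable {α : Type*} [BooleanAlgebra α] {R : Set α} {a b c : α}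

theorem ne_bot (hR : IsLadder R) (ha : a ∈ R) : a ≠ ⊥ :=
  fun h => hR.bot_notMem (h ▸ ha)

theorem ne_top (hR : IsLadder R) (ha : a ∈ R) : a ≠ ⊤ :=
  fun h => hR.ne_bot (hR.compl_mem a ha) (h ▸ compl_top)

theorem not_symmGen_compl (hR : IsLadder R) (ha : a ∈ R) (hb : b ∈ R)
    (hab : SymmGen (· ≤ ·) a b) : ¬ SymmGen (· ≤ ·) aᶜ b := fun hacb =>
  BooleanAlgebra.not_symmGen_and_symmGen_compl (hR.ne_bot ha) (hR.ne_top ha) (hR.ne_bot hb)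
    (hR.ne_top hb) ⟨hab, hacb⟩

theorem symmGen_trans (hR : IsLadder R) (ha : a ∈ R) (hb : b ∈ R) (hc : c ∈ R)
    (hab : SymmGen (· ≤ ·) a b) (hbc : SymmGen (· ≤ ·) b c) : SymmGen (· ≤ ·) a c := by
  rcases hR.width_le_two a ha c hc bᶜ (hR.compl_mem b hb) with hac | habc | hcbc
  · exact hac
  · exact absurd habc.symm (hR.not_symmGen_compl hb ha hab.symm)
  · exact absurd hcbc.symm (hR.not_symmGen_compl hb hc hbc)

theorem symmGen_or_symmGen_compl (hR : IsLadder R) (ha : a ∈ R) (hb : b ∈ R) :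
    SymmGen (· ≤ ·) a b ∨ SymmGen (· ≤ ·) aᶜ b := by
  rcases hR.width_le_two a ha aᶜ (hR.compl_mem a ha) b hb with haac | hab | hacb
  · exact absurd haac.symm (hR.not_symmGen_compl ha ha SymmGen.rfl)
  · exact Or.inl hab
  · exact Or.inr hacb

theorem isChain_symmGen (hR : IsLadder R) (ha : a ∈ R) :
    IsChain (· ≤ ·) {b ∈ R | SymmGen (· ≤ ·) a b} :=
  fun _ hb _ hc _ => hR.symmGen_trans hb.1 ha hc.1 hb.2.symm hc.2

theorem compl_image_symmGen (hR : IsLadder R) (ha : a ∈ R) :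
    compl '' {b ∈ R | SymmGen (· ≤ ·) a b} = R \ {b ∈ R | SymmGen (· ≤ ·) a b} := by
  ext b
  constructor
  · rintro ⟨b, ⟨hb, hab⟩, rfl⟩
    refine ⟨hR.compl_mem b hb, fun ⟨_, habc⟩ => ?_⟩
    exact hR.not_symmGen_compl hb ha hab.symm habc.symm
  · rintro ⟨hb, hab⟩
    refine ⟨bᶜ, ⟨hR.compl_mem b hb, ?_⟩, compl_compl b⟩
    rcases hR.symmGen_or_symmGen_compl hb ha with hba | hbca
    · exact absurd ⟨hb, hba.symm⟩ hab
    · exact hbca.symm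

end IsLadder

theorem ladder_is_disjoint_union_of_two_chains_general {G : Type*}
    (R : Set (Set G)) (hRne : R.Nonempty) (hmem : ∀ A ∈ R, A.Nonempty)
    (hwidth : ¬ ∃ A ∈ R, ∃ B ∈ R, ∃ C ∈ R,
      (¬ A ⊆ B ∧ ¬ B ⊆ A) ∧ (¬ A ⊆ C ∧ ¬ C ⊆ A) ∧ (¬ B ⊆ C ∧ ¬ C ⊆ B))
    (hcompl : ∀ A ∈ R, Aᶜ ∈ R) :
    ∃ C ⊆ R, IsChain (· ⊆ ·) C ∧
      R = C ∪ ((fun A => Aᶜ) '' C) ∧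
      Disjoint C ((fun A => Aᶜ) '' C) ∧
      C.ncard = R.ncard / 2 ∧ ((fun A => Aᶜ) '' C).ncard = R.ncard / 2 := by
  have hR : IsLadder R := by
    refine ⟨fun h => (hmem ∅ h).ne_empty rfl, hcompl, fun A hA B hB C hC => ?_⟩
    by_contra h
    simp only [SymmGen, not_or] at h
    exact hwidth ⟨A, hA, B, hB, C, hC, ⟨h.1.1, h.1.2⟩, ⟨h.2.1.1, h.2.1.2⟩, ⟨h.2.2.1, h.2.2.2⟩⟩
  obtain ⟨A, hA⟩ := hRne
  set C := {B ∈ R | SymmGen (· ≤ ·) A B}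
  have himage : compl '' C = R \ C := hR.compl_image_symmGen hA
  have hunion : R = C ∪ compl '' C := by rw [himage, union_sdiff_cancel (sep_subset R _)]
  have hdisj : Disjoint C (compl '' C) := himage ▸ disjoint_sdiff_right
  have himage_card : (compl '' C).ncard = C.ncard := ncard_image_of_injective C compl_injective
  have hR_card : R.ncard = 2 * C.ncard := by
    rw [hunion]
    exact ncard_union_eq_two_mul hdisj (compl_injective.encard_image C)
  exact ⟨C, sep_subset R _, hR.isChain_symmGen hA, hunion, hdisj, by omega, himage_card.trans (by omega)⟩

/-- Let `G` be a finite set and `R` a finite nonempty family of nonempty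
subsets of `G` that contains no three pairwise `⊆`-incomparable members and is closed
under complementation.  Then `R` is the disjoint union of two chains of equal cardinality:
there is a chain `C ⊆ R` with `R = C ∪ {G∖A : A ∈ C}`, the two families are disjoint, and
each has cardinality `|R|/2`. -/
theorem ladder_is_disjoint_union_of_two_chains {G : Type*} [Fintype G]
    (R : Set (Set G)) (hRne : R.Nonempty) (hmem : ∀ A ∈ R, A.Nonempty)
    (hwidth : ¬ ∃ A ∈ R, ∃ B ∈ R, ∃ C ∈ R,
      (¬ A ⊆ B ∧ ¬ B ⊆ A) ∧ (¬ A ⊆ C ∧ ¬ C ⊆ A) ∧ (¬ B ⊆ C ∧ ¬ C ⊆ B))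
    (hcompl : ∀ A ∈ R, Aᶜ ∈ R) :
    ∃ C ⊆ R, IsChain (· ⊆ ·) C ∧
      R = C ∪ ((fun A => Aᶜ) '' C) ∧
      Disjoint C ((fun A => Aᶜ) '' C) ∧
      C.ncard = R.ncard / 2 ∧ ((fun A => Aᶜ) '' C).ncard = R.ncard / 2 :=
  ladder_is_disjoint_union_of_two_chains_general R hRne hmem hwidth hcompl
end

section
/- Let K = (G,M,I) be a finite formal context whose interordinal scaling dimension is defined. Then the interordinal scaling dimension of K equals the smallest number of extent ladders of K whose union contains all meet-irreducible extents of K. -/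
/-- An extent ladder of `K = (G, M, I)`: a set of nonempty extents containing no three
pairwise `⊆`-incomparable members and closed under complementation in `G`. -/
def IsExtentLadder {G M : Type*} (I : G → M → Prop) (R : Set (Set G)) : Prop :=
  (∀ A ∈ R, IsExtent I A ∧ A.Nonempty) ∧
  (¬ ∃ A ∈ R, ∃ B ∈ R, ∃ C ∈ R,
    (¬ A ⊆ B ∧ ¬ B ⊆ A) ∧ (¬ A ⊆ C ∧ ¬ C ⊆ A) ∧ (¬ B ⊆ C ∧ ¬ C ⊆ B)) ∧
  (∀ A ∈ R, Aᶜ ∈ R)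

/-- `K` has interordinal scaling dimension at most `d`: there are `d` extent ladders such
that the extents of `K` are exactly the intersections `⋂₀ F` of subfamilies `F` of the
union of the ladders (`⋂₀ ∅ = G`). -/
def HasISDAtMost {G M : Type*} (I : G → M → Prop) (d : ℕ) : Prop :=
  ∃ R : Fin d → Set (Set G), (∀ i, IsExtentLadder I (R i)) ∧
    {E | IsExtent I E} = {E | ∃ F ⊆ ⋃ i, R i, E = ⋂₀ F}

/-- The interordinal scaling dimension: the least `d` such that `HasISDAtMost I d`. -/
noncomputable def isd {G M : Type*} (I : G → M → Prop) : ℕ :=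
  sInf {d | HasISDAtMost I d}

/-- Extents are closed under arbitrary intersections. -/
lemma extent_sInter {G M : Type*} (I : G → M → Prop) (F : Set (Set G))
    (hF : ∀ A ∈ F, IsExtent I A) : IsExtent I (⋂₀ F) := by
  classical
  refine ⟨{m | ∃ A, ∃ h : A ∈ F, m ∈ Classical.choose (hF A h)}, ?_⟩
  ext g
  simp only [Set.mem_sInter, Set.mem_setOf_eq]
  constructor
  · rintro hg m ⟨A, hA, hm⟩
    have hspec := Classical.choose_spec (hF A hA)
    have hgA : g ∈ A := hg A hA
    rw [hspec] at hgA
    exact hgA m hm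
  · intro hg A hA
    have hspec := Classical.choose_spec (hF A hA)
    rw [hspec]
    intro m hm
    exact hg m ⟨A, hA, hm⟩

/-- In a finite context, every extent contains the intersection of the
meet-irreducible extents above it. -/
lemma sInter_meetIrred_subset {G M : Type*} [Finite G] (I : G → M → Prop) :
    ∀ E : Set G, IsExtent I E →
      ⋂₀ {A | IsMeetIrreducibleExtent I A ∧ E ⊆ A} ⊆ E := by
  intro E
  refine (wellFounded_gt (α := Set G)).induction
    (C := fun E => IsExtent I E → ⋂₀ {A | IsMeetIrreducibleExtent I A ∧ E ⊆ A} ⊆ E)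
    E (fun x ih hx => ?_)
  by_cases hirr : IsMeetIrreducibleExtent I x
  · exact Set.sInter_subset_of_mem ⟨hirr, subset_rfl⟩
  · by_cases huniv : x = Set.univ
    · subst huniv; exact Set.subset_univ _
    · have heq : x = ⋂₀ {F | IsExtent I F ∧ x ⊂ F} := by
        by_contra h
        exact hirr ⟨hx, huniv, h⟩
      intro g hg
      rw [heq]
      intro F hF
      refine ih F hF.2 hF.1 ?_
      intro A hA
      exact hg A ⟨hA.1, hF.2.subset.trans hA.2⟩

/-- The key equivalence. -/
lemma hasISD_iff_cover {G M : Type*} [Finite G] (I : G → M → Prop) (d : ℕ) :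
    HasISDAtMost I d ↔ ∃ R : Fin d → Set (Set G), (∀ i, IsExtentLadder I (R i)) ∧
      ∀ E : Set G, IsMeetIrreducibleExtent I E → E ∈ ⋃ i, R i := by
  constructor
  · rintro ⟨R, hlad, hext⟩
    refine ⟨R, hlad, fun E hE => ?_⟩
    have hEmem : E ∈ {E | ∃ F ⊆ ⋃ i, R i, E = ⋂₀ F} := by
      rw [← hext]; exact hE.1
    obtain ⟨F, hFsub, hEF⟩ := hEmem
    by_cases hmem : ∃ A ∈ F, E = A
    · obtain ⟨A, hAF, hEA⟩ := hmem
      rw [hEA]; exact hFsub hAF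
    · exfalso
      push_neg at hmem
      apply hE.2.2
      apply subset_antisymm
      · exact Set.subset_sInter fun F' hF' => hF'.2.subset
      · have hFsubset : F ⊆ {F' | IsExtent I F' ∧ E ⊂ F'} := by
          intro A hAF
          obtain ⟨i, hi⟩ := Set.mem_iUnion.mp (hFsub hAF)
          refine ⟨((hlad i).1 A hi).1, ?_⟩
          refine HasSubset.Subset.ssubset_of_ne ?_ (hmem A hAF)
          rw [hEF]; exact Set.sInter_subset_of_mem hAF
        calc ⋂₀ {F' | IsExtent I F' ∧ E ⊂ F'} ⊆ ⋂₀ F :=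
              Set.sInter_subset_sInter hFsubset
          _ = E := hEF.symm
  · rintro ⟨R, hlad, hcov⟩
    refine ⟨R, hlad, ?_⟩
    ext E
    simp only [Set.mem_setOf_eq]
    constructor
    · intro hE
      refine ⟨{A | A ∈ ⋃ i, R i ∧ E ⊆ A}, fun A hA => hA.1, ?_⟩
      apply subset_antisymm
      · exact Set.subset_sInter fun A hA => hA.2
      · calc ⋂₀ {A | A ∈ ⋃ i, R i ∧ E ⊆ A}
            ⊆ ⋂₀ {A | IsMeetIrreducibleExtent I A ∧ E ⊆ A} :=
              Set.sInter_subset_sInter (fun A hA => ⟨hcov A hA.1, hA.2⟩)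
          _ ⊆ E := sInter_meetIrred_subset I E hE
    · rintro ⟨F, hFsub, rfl⟩
      apply extent_sInter
      intro A hA
      obtain ⟨i, hi⟩ := Set.mem_iUnion.mp (hFsub hA)
      exact ((hlad i).1 A hi).1

/-- For a finite formal context whose interordinal scaling dimension is
defined, the interordinal scaling dimension equals the smallest number of extent ladders
whose union contains all meet-irreducible extents. -/
theorem isd_eq_min_ladder_cover {G M : Type*} [Fintype G] [Fintype M] (I : G → M → Prop)
    (hdef : ∃ d, HasISDAtMost I d) :
    isd I = sInf {l | ∃ R : Fin l → Set (Set G), (∀ i, IsExtentLadder I (R i)) ∧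
      ∀ E : Set G, IsMeetIrreducibleExtent I E → E ∈ ⋃ i, R i} := by
  unfold isd
  congr 1
  ext d
  exact hasISD_iff_cover I d
end
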